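/- arXiv:2106.13602 — 7 statements merged into one kernel-verified Lean document; each statement's English description precedes it below -/
import Mathlib

section
/- Let A₁ be a real m₁×n matrix and N a real n×q matrix that is a null-space basis of A₁ (z ↦ N·z is injective and its range equals the kernel of x ↦ A₁·x). Then for every real m₂×n matrix A₂, the rank of the vertically stacked matrix [A₁; A₂] equals rank(A₁) + rank(A₂·N). -/
open Matrix

/-- `N` is a null-space basis of `A` if `z ↦ N·z` is injective and its range
equals the kernel of `x ↦ A·x`. -/
def IsNullSpaceBasis {m n q : ℕ} (A : Matrix (Fin m) (Fin n) ℝ)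
    (N : Matrix (Fin n) (Fin q) ℝ) : Prop :=
  Function.Injective (fun z : Fin q → ℝ => N *ᵥ z) ∧
    ∀ x : Fin n → ℝ, A *ᵥ x = 0 ↔ ∃ z : Fin q → ℝ, x = N *ᵥ z

/-- Variable elimination: if `N` is a null-space basis of `A₁`, then for any `A₂`,
`rank [A₁; A₂] = rank A₁ + rank (A₂·N)`. -/
theorem rank_fromRows_eq_rank_add_rank_proj {m₁ m₂ n q : ℕ}
    (A₁ : Matrix (Fin m₁) (Fin n) ℝ) (N : Matrix (Fin n) (Fin q) ℝ)
    (hN : IsNullSpaceBasis A₁ N)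
    (A₂ : Matrix (Fin m₂) (Fin n) ℝ) :
    (fromRows A₁ A₂).rank = A₁.rank + (A₂ * N).rank := by
  obtain ⟨hinj, hker⟩ := hN
  have hNinj : Function.Injective N.mulVecLin := hinj
  -- ker A₁ = range N
  have hkerN : LinearMap.ker A₁.mulVecLin = LinearMap.range N.mulVecLin := by
    ext x
    simp only [LinearMap.mem_ker, LinearMap.mem_range, mulVecLin_apply]
    rw [hker x]
    constructor
    · rintro ⟨z, hz⟩; exact ⟨z, hz.symm⟩
    · rintro ⟨z, hz⟩; exact ⟨z, hz.symm⟩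
  -- ker of the stacked matrix
  have hkerS : LinearMap.ker (fromRows A₁ A₂).mulVecLin
      = LinearMap.ker A₁.mulVecLin ⊓ LinearMap.ker A₂.mulVecLin := by
    ext x
    simp only [LinearMap.mem_ker, Submodule.mem_inf, mulVecLin_apply,
      fromRows_mulVec]
    constructor
    · intro h
      constructor
      · ext i; exact congrFun h (Sum.inl i)
      · ext i; exact congrFun h (Sum.inr i)
    · rintro ⟨h1, h2⟩
      ext (i | i)
      · exact congrFun h1 i
      · exact congrFun h2 i
  -- ker (A₂ N) = comap N (ker A₂)
  have hcomap : LinearMap.ker (A₂ * N).mulVecLin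
      = Submodule.comap N.mulVecLin (LinearMap.ker A₂.mulVecLin) := by
    rw [mulVecLin_mul]; rfl
  -- finrank equalities
  have e1 := LinearMap.finrank_range_add_finrank_ker (fromRows A₁ A₂).mulVecLin
  have e2 := LinearMap.finrank_range_add_finrank_ker A₁.mulVecLin
  have e3 := LinearMap.finrank_range_add_finrank_ker (A₂ * N).mulVecLin
  rw [Module.finrank_fin_fun] at e1 e2 e3
  -- finrank of ker A₁ is q
  have hq : Module.finrank ℝ (LinearMap.ker A₁.mulVecLin) = q := by
    rw [hkerN, LinearMap.finrank_range_of_inj hNinj,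
      Module.finrank_fin_fun]
  -- finrank ker(A₂N) = finrank (ker A₁ ⊓ ker A₂)
  have hmap : Submodule.map N.mulVecLin (LinearMap.ker (A₂ * N).mulVecLin)
      = LinearMap.ker A₁.mulVecLin ⊓ LinearMap.ker A₂.mulVecLin := by
    rw [hcomap, Submodule.map_comap_eq, hkerN, inf_comm]
  have hkk : Module.finrank ℝ (LinearMap.ker (A₂ * N).mulVecLin)
      = Module.finrank ℝ
        (LinearMap.ker A₁.mulVecLin ⊓ LinearMap.ker A₂.mulVecLin : Submodule ℝ _) := by
    rw [← hmap]
    exact (Submodule.equivMapOfInjective _ hNinj _).finrank_eq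
  rw [hkerS] at e1
  rw [hq] at e2
  rw [hkk] at e3
  show Module.finrank ℝ (LinearMap.range (fromRows A₁ A₂).mulVecLin)
    = Module.finrank ℝ (LinearMap.range A₁.mulVecLin)
      + Module.finrank ℝ (LinearMap.range (A₂ * N).mulVecLin)
  omega
end

section
/- Let C be a real n×n matrix, A a real m×n matrix, r₁ ∈ ℝⁿ, and N a real n×q matrix that is a null-space basis of A (z ↦ N·z is injective and its range equals the kernel of x ↦ A·x). Then for every Δx ∈ ℝⁿ the following are equivalent: (i) A·Δx = 0 and there exists Δλ ∈ ℝᵐ with C·Δx − Aᵀ·Δλ = r₁; (ii) there exists Δz ∈ ℝ^q with Δx = N·Δz and (Nᵀ·C·N)·Δz = Nᵀ·r₁. In other words, the augmented system [C −Aᵀ; −A 0]·[Δx; Δλ] = [r₁; 0] is solved exactly by the solutions of the projected normal equations Nᵀ·C·N·Δz = Nᵀ·r₁ via the change of variables Δx = N·Δz. -/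
open Matrix

/-! The constraint row says `Δx ∈ ker A = range N`, i.e. `Δx = N Δz`. The first row is solvable
in `Δλ` iff the residual `C Δx - r₁` lies in `range Aᵀ = (ker A)^⊥ = (range N)^⊥ = ker Nᵀ`,
which is exactly the projected normal equation `Nᵀ (C N Δz - r₁) = 0`. -/

namespace Matrix

section CommSemiring

variable {R m n : Type*} [CommSemiring R] [Fintype m] [Fintype n]

theorem transpose_mulVec_dotProduct (A : Matrix m n R) (w : m → R) (x : n → R) :
    (Aᵀ *ᵥ w) ⬝ᵥ x = w ⬝ᵥ (A *ᵥ x) := by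
  rw [mulVec_transpose, dotProduct_mulVec]

theorem dualMap_mulVecLin_dotProductEquiv [DecidableEq m] [DecidableEq n]
    (A : Matrix m n R) (w : m → R) :
    A.mulVecLin.dualMap (dotProductEquiv R m w) = dotProductEquiv R n (Aᵀ *ᵥ w) :=
  LinearMap.ext fun x => (transpose_mulVec_dotProduct A w x).symm

end CommSemiring

variable {K m n q : Type*} [Field K] [Fintype m] [Fintype n] [Fintype q]

theorem exists_transpose_mulVec_eq_iff (A : Matrix m n K) (v : n → K) :
    (∃ w, Aᵀ *ᵥ w = v) ↔ ∀ x, A *ᵥ x = 0 → v ⬝ᵥ x = 0 := by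
  classical
  refine ⟨?_, fun hv => ?_⟩
  · rintro ⟨w, rfl⟩ x hx
    rw [transpose_mulVec_dotProduct, hx, dotProduct_zero]
  · have hann : dotProductEquiv K n v ∈ (LinearMap.ker A.mulVecLin).dualAnnihilator :=
      (Submodule.mem_dualAnnihilator _).mpr hv
    rw [← LinearMap.range_dualMap_eq_dualAnnihilator_ker] at hann
    obtain ⟨φ, hφ⟩ := hann
    refine ⟨(dotProductEquiv K m).symm φ, (dotProductEquiv K n).injective ?_⟩
    rw [← dualMap_mulVecLin_dotProductEquiv, LinearEquiv.apply_symm_apply, hφ]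

theorem exists_transpose_mulVec_eq_iff_of_ker_eq_range {A : Matrix m n K} {N : Matrix n q K}
    (hker : ∀ x, A *ᵥ x = 0 ↔ ∃ z, x = N *ᵥ z) (v : n → K) :
    (∃ w, Aᵀ *ᵥ w = v) ↔ Nᵀ *ᵥ v = 0 := by
  simp_rw [exists_transpose_mulVec_eq_iff, hker, ← dotProduct_eq_zero_iff (v := Nᵀ *ᵥ v),
    transpose_mulVec_dotProduct, forall_exists_index, forall_eq_apply_imp_iff]

end Matrix

/-- Null-space-method reduction: `Δx` solves the augmented system
`[C −Aᵀ; −A 0]·[Δx; Δlam] = [r₁; 0]` (for some `Δlam`) iff `Δx = N·Δz` for a solution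
`Δz` of the projected normal equations `Nᵀ·C·N·Δz = Nᵀ·r₁`. -/
theorem augmented_iff_projected_normal_equations {m n q : ℕ}
    (C : Matrix (Fin n) (Fin n) ℝ) (A : Matrix (Fin m) (Fin n) ℝ)
    (r₁ : Fin n → ℝ) (N : Matrix (Fin n) (Fin q) ℝ)
    (hN : IsNullSpaceBasis A N)
    (Δx : Fin n → ℝ) :
    (A *ᵥ Δx = 0 ∧ ∃ Δlam : Fin m → ℝ, C *ᵥ Δx - Aᵀ *ᵥ Δlam = r₁) ↔
      (∃ Δz : Fin q → ℝ, Δx = N *ᵥ Δz ∧ (Nᵀ * C * N) *ᵥ Δz = Nᵀ *ᵥ r₁) := by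
  obtain ⟨-, hker⟩ := hN
  rw [hker Δx, ← exists_and_right]
  refine exists_congr fun Δz => and_congr_right fun hΔx => ?_
  calc (∃ Δlam, C *ᵥ Δx - Aᵀ *ᵥ Δlam = r₁)
      ↔ ∃ Δlam, Aᵀ *ᵥ Δlam = C *ᵥ Δx - r₁ :=
        exists_congr fun _ => by rw [eq_sub_iff_add_eq, sub_eq_iff_eq_add', eq_comm]
    _ ↔ Nᵀ *ᵥ (C *ᵥ Δx - r₁) = 0 := exists_transpose_mulVec_eq_iff_of_ker_eq_range hker _
    _ ↔ (Nᵀ * C * N) *ᵥ Δz = Nᵀ *ᵥ r₁ := by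
      rw [hΔx, mulVec_sub, sub_eq_zero, mulVec_mulVec, mulVec_mulVec, Matrix.mul_assoc]
end

section
/- Let C be a real n×n matrix, A a real m×n matrix, r₁ ∈ ℝⁿ, and N a real n×q matrix that is a null-space basis of A (z ↦ N·z is injective and its range equals the kernel of x ↦ A·x). If Δz ∈ ℝ^q solves the projected normal equations (Nᵀ·C·N)·Δz = Nᵀ·r₁ and Δx := N·Δz, then there exists a vector of Lagrange multipliers Δλ ∈ ℝᵐ solving Aᵀ·Δλ = C·Δx − r₁. -/
open Matrix

theorem Matrix.exists_transpose_mulVec_eq_iff_s6 {K m n : Type*} [Field K] [Fintype m] [Fintype n]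
    [DecidableEq m] [DecidableEq n] (A : Matrix m n K) (b : n → K) :
    (∃ y, Aᵀ *ᵥ y = b) ↔ ∀ v, A *ᵥ v = 0 → b ⬝ᵥ v = 0 := by
  constructor
  · rintro ⟨y, rfl⟩ v hv
    rw [mulVec_transpose, ← dotProduct_mulVec, hv, dotProduct_zero]
  · intro hb
    have hmem : dotProductEquiv K n b ∈ (LinearMap.ker A.mulVecLin).dualAnnihilator :=
      (Submodule.mem_dualAnnihilator _).2 hb
    rw [← LinearMap.range_dualMap_eq_dualAnnihilator_ker] at hmem
    obtain ⟨ψ, hψ⟩ := hmem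
    obtain ⟨y, rfl⟩ := (dotProductEquiv K m).surjective ψ
    refine ⟨y, (dotProductEquiv K n).injective ?_⟩
    rw [← hψ]
    refine LinearMap.ext fun v => ?_
    simp [mulVec_transpose, dotProduct_mulVec]

/-- Solvability of the dual equation: if `Δz` solves the projected normal equations
`(Nᵀ·C·N)·Δz = Nᵀ·r₁` and `Δx = N·Δz`, then there exist Lagrange multipliers `Δlam`
with `Aᵀ·Δlam = C·Δx − r₁`. -/
theorem exists_dual_of_projected_normal_equations {m n q : ℕ}
    (C : Matrix (Fin n) (Fin n) ℝ) (A : Matrix (Fin m) (Fin n) ℝ)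
    (r₁ : Fin n → ℝ) (N : Matrix (Fin n) (Fin q) ℝ)
    (hN : IsNullSpaceBasis A N)
    (Δz : Fin q → ℝ)
    (hΔz : (Nᵀ * C * N) *ᵥ Δz = Nᵀ *ᵥ r₁)
    (Δx : Fin n → ℝ) (hΔx : Δx = N *ᵥ Δz) :
    ∃ Δlam : Fin m → ℝ, Aᵀ *ᵥ Δlam = C *ᵥ Δx - r₁ := by
  subst hΔx
  have hresidual : Nᵀ *ᵥ (C *ᵥ (N *ᵥ Δz) - r₁) = 0 := by
    rw [mulVec_sub, mulVec_mulVec, mulVec_mulVec, hΔz, sub_self]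
  refine (exists_transpose_mulVec_eq_iff_s6 A _).2 fun v hv => ?_
  obtain ⟨z, rfl⟩ := (hN.2 v).1 hv
  rw [dotProduct_mulVec, ← mulVec_transpose, hresidual, zero_dotProduct]
end

section
/- Let N be a real n×q matrix, A_e a real m_e×n matrix, A_i a real m_i×n matrix, A₀ a real m₀×n matrix, and Ā a real m̄×n matrix with Ā·N = 0. Let λ₀, w₀ : Fin m₀ → ℝ with λ₀ j > 0 and w₀ j > 0 for all j, let d : Fin m_i → ℝ with d j > 0 for all j, and let x ∈ ℝⁿ, b_e ∈ ℝ^{m_e}, λ̄ ∈ ℝ^{m̄}, F ∈ ℝ^{m₀}, G ∈ ℝ^{m_i}. Define H := [ diag(fun j => √(λ₀ j / w₀ j)) · A₀ · N ; diag(fun j => √(d j)) · A_i · N ; A_e · N ] and g := ( diag(fun j => √(w₀ j / λ₀ j))·F ; diag(fun j => 1/√(d j))·G ; b_e − A_e·x ) stacked conformally. Then Hᵀ·g = Nᵀ·r₁, where r₁ := Āᵀ·λ̄ + A₀ᵀ·F + A_eᵀ·(b_e − A_e·x) + A_iᵀ·G. -/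
open Matrix

/-! Factor `H = M * N` with `M` the stacked scaled constraint matrix, so `Hᵀ g = Nᵀ (Mᵀ g)`.
In each block of `Mᵀ g` the two diagonal scalings are reciprocal and cancel, and the missing
`Āᵀ λ̄` term of `r₁` is invisible after applying `Nᵀ` because `Ā N = 0`. -/

namespace Matrix

variable {l m n R : Type*} [Fintype l] [Fintype m] [CommSemiring R]

lemma transpose_diagonal_mul_mulVec_diagonal_mulVec [DecidableEq m] {s t : m → R}
    (hst : s * t = 1) (A : Matrix m n R) (u : m → R) :
    (diagonal s * A)ᵀ *ᵥ (diagonal t *ᵥ u) = Aᵀ *ᵥ u := by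
  rw [transpose_mul, diagonal_transpose, mulVec_mulVec, Matrix.mul_assoc, diagonal_mul_diagonal,
    ← Pi.mul_def, hst, Pi.one_def, diagonal_one, Matrix.mul_one]

lemma transpose_mulVec_transpose_mulVec_eq_zero {A : Matrix l m R} {N : Matrix m n R}
    (hAN : A * N = 0) (v : l → R) : Nᵀ *ᵥ (Aᵀ *ᵥ v) = 0 := by
  rw [mulVec_mulVec, ← transpose_mul, hAN, transpose_zero, zero_mulVec]

end Matrix

lemma Real.sqrt_div_mul_sqrt_div {a b : ℝ} (ha : 0 < a) (hb : 0 < b) :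
    √(a / b) * √(b / a) = 1 := by
  rw [← Real.sqrt_mul (div_nonneg ha.le hb.le), div_mul_div_comm, mul_comm a,
    div_self (mul_pos hb ha).ne', Real.sqrt_one]

/-- Right-hand-side identity underlying the least-squares form of the IPM-HLSP:
with `H = [diag √(λ₀/w₀)·A₀·N ; diag √d·A_i·N ; A_e·N]` and the conformally stacked
vector `g = (diag √(w₀/λ₀)·F ; diag (1/√d)·G ; b_e − A_e·x)`, one has
`Hᵀ·g = Nᵀ·r₁` where `r₁ = Āᵀ·λ̄ + A₀ᵀ·F + A_eᵀ·(b_e − A_e·x) + A_iᵀ·G`,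
provided `Ā·N = 0`. -/
theorem stacked_rhs_eq_projected_rhs {n q me mi m₀ mb : ℕ}
    (N : Matrix (Fin n) (Fin q) ℝ)
    (Ae : Matrix (Fin me) (Fin n) ℝ) (Ai : Matrix (Fin mi) (Fin n) ℝ)
    (A₀ : Matrix (Fin m₀) (Fin n) ℝ) (Ab : Matrix (Fin mb) (Fin n) ℝ)
    (hAbN : Ab * N = 0)
    (lam₀ w₀ : Fin m₀ → ℝ)
    (hlam₀ : ∀ j, 0 < lam₀ j) (hw₀ : ∀ j, 0 < w₀ j)
    (d : Fin mi → ℝ) (hd : ∀ j, 0 < d j)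
    (x : Fin n → ℝ) (be : Fin me → ℝ) (lamb : Fin mb → ℝ)
    (F : Fin m₀ → ℝ) (G : Fin mi → ℝ)
    (H : Matrix ((Fin m₀ ⊕ Fin mi) ⊕ Fin me) (Fin q) ℝ)
    (hH : H = fromRows
      (fromRows
        (Matrix.diagonal (fun j => Real.sqrt (lam₀ j / w₀ j)) * A₀ * N)
        (Matrix.diagonal (fun j => Real.sqrt (d j)) * Ai * N))
      (Ae * N))
    (g : (Fin m₀ ⊕ Fin mi) ⊕ Fin me → ℝ)
    (hg : g = Sum.elim
      (Sum.elim
        (Matrix.diagonal (fun j => Real.sqrt (w₀ j / lam₀ j)) *ᵥ F)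
        (Matrix.diagonal (fun j => 1 / Real.sqrt (d j)) *ᵥ G))
      (be - Ae *ᵥ x))
    (r₁ : Fin n → ℝ)
    (hr₁ : r₁ = Abᵀ *ᵥ lamb + A₀ᵀ *ᵥ F + Aeᵀ *ᵥ (be - Ae *ᵥ x) + Aiᵀ *ᵥ G) :
    Hᵀ *ᵥ g = Nᵀ *ᵥ r₁ := by
  subst hH hg hr₁
  have h₀ : (fun j => √(lam₀ j / w₀ j)) * (fun j => √(w₀ j / lam₀ j)) = 1 :=
    funext fun j => Real.sqrt_div_mul_sqrt_div (hlam₀ j) (hw₀ j)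
  have hi : (fun j => √(d j)) * (fun j => 1 / √(d j)) = 1 :=
    funext fun j => mul_one_div_cancel (Real.sqrt_pos.2 (hd j)).ne'
  rw [← fromRows_mul, ← fromRows_mul, transpose_mul, ← mulVec_mulVec, transpose_fromRows,
    transpose_fromRows, fromCols_mulVec_sumElim, fromCols_mulVec_sumElim,
    transpose_diagonal_mul_mulVec_diagonal_mulVec h₀,
    transpose_diagonal_mul_mulVec_diagonal_mulVec hi]
  simp only [mulVec_add, transpose_mulVec_transpose_mulVec_eq_zero hAbN, zero_add]
  abel
end

section
/- Let N be a real n×q matrix, A_e a real m_e×n matrix, A_i a real m_i×n matrix, A₀ a real m₀×n matrix, and Ā a real m̄×n matrix with Ā·N = 0. Let λ₀, w₀ : Fin m₀ → ℝ with λ₀ j > 0 and w₀ j > 0 for all j, let d : Fin m_i → ℝ with d j > 0 for all j, and let x ∈ ℝⁿ, b_e ∈ ℝ^{m_e}, λ̄ ∈ ℝ^{m̄}, F ∈ ℝ^{m₀}, G ∈ ℝ^{m_i}. Define H := [ diag(fun j => √(λ₀ j / w₀ j)) · A₀ · N ; diag(fun j => √(d j)) · A_i · N ; A_e · N ], g :=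 ( diag(fun j => √(w₀ j / λ₀ j))·F ; diag(fun j => 1/√(d j))·G ; b_e − A_e·x ) stacked conformally, C := A_eᵀ·A_e + A_iᵀ·diag(d)·A_i + A₀ᵀ·diag(fun j => λ₀ j / w₀ j)·A₀, and r₁ := Āᵀ·λ̄ + A₀ᵀ·F + A_eᵀ·(b_e − A_e·x) + A_iᵀ·G. Then for every Δz ∈ ℝ^q, Δz minimizes the function z ↦ ‖H·z − g‖² over ℝ^q if and only if (Nᵀ·C·N)·Δz = Nᵀ·r₁. In other words, the projected normal equations of the interior-point Newton step are exactly the optimality conditions of the least-squares problem min_z ‖H·z − g‖². -/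
open Matrix

/-! Writing `M` for the stacked, row-weighted matrix `[D₀ A₀; Dᵢ Aᵢ; Aₑ]`, we have `H = M N`, and the
weights are chosen so that `Mᵀ M = C` and `Mᵀ g = r₁ - Āᵀ λ̄`; since `Ā N = 0`, the projected normal
equations are exactly `Hᵀ H Δz = Hᵀ g`. These characterise the least-squares minimisers through
the expansion `‖H (z + v) - g‖² = ‖H z - g‖² + 2 ⟪v, Hᵀ (H z - g)⟫ + ‖H v‖²`. -/

section LeastSquares

variable {ι κ : Type*} [Fintype ι] [Fintype κ]

theorem EuclideanSpace.norm_symm_equiv_sq (v : ι → ℝ) :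
    ‖(EuclideanSpace.equiv ι ℝ).symm v‖ ^ 2 = v ⬝ᵥ v := by
  rw [EuclideanSpace.real_norm_sq_eq]
  simp [dotProduct, sq]

theorem residual_add_sq (H : Matrix ι κ ℝ) (g : ι → ℝ) (z v : κ → ℝ) :
    (H *ᵥ (z + v) - g) ⬝ᵥ (H *ᵥ (z + v) - g) =
      (H *ᵥ z - g) ⬝ᵥ (H *ᵥ z - g) + 2 * (v ⬝ᵥ Hᵀ *ᵥ (H *ᵥ z - g)) + H *ᵥ v ⬝ᵥ H *ᵥ v := by
  have hsplit : H *ᵥ (z + v) - g = (H *ᵥ z - g) + H *ᵥ v := by rw [mulVec_add]; abel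
  rw [hsplit, dotProduct_mulVec, vecMul_transpose]
  simp only [dotProduct_add, add_dotProduct, dotProduct_comm (H *ᵥ z - g) (H *ᵥ v)]
  ring

theorem forall_residual_le_iff_normal_equations (H : Matrix ι κ ℝ) (g : ι → ℝ) (z₀ : κ → ℝ) :
    (∀ z, (H *ᵥ z₀ - g) ⬝ᵥ (H *ᵥ z₀ - g) ≤ (H *ᵥ z - g) ⬝ᵥ (H *ᵥ z - g)) ↔
      (Hᵀ * H) *ᵥ z₀ = Hᵀ *ᵥ g := by
  rw [← sub_eq_zero, ← mulVec_mulVec, ← mulVec_sub]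
  set s := Hᵀ *ᵥ (H *ᵥ z₀ - g) with hs_def
  constructor
  · intro hmin
    -- perturbing along `s` gives a nonnegative quadratic in `t` with discriminant `4 (s ⬝ᵥ s)²`
    have hquad : ∀ t : ℝ, 0 ≤ (H *ᵥ s ⬝ᵥ H *ᵥ s) * (t * t) + 2 * (s ⬝ᵥ s) * t + 0 := by
      intro t
      have h := hmin (z₀ + t • s)
      rw [residual_add_sq, mulVec_smul] at h
      simp only [smul_dotProduct, dotProduct_smul, smul_eq_mul] at h
      linarith
    have hdiscrim := discrim_le_zero hquad
    rw [discrim] at hdiscrim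
    exact dotProduct_self_eq_zero.mp (by nlinarith)
  · intro hs z
    have h := residual_add_sq H g z₀ (z - z₀)
    rw [add_sub_cancel, ← hs_def, hs, dotProduct_zero] at h
    have hnonneg : 0 ≤ H *ᵥ (z - z₀) ⬝ᵥ H *ᵥ (z - z₀) := by
      simpa using dotProduct_star_self_nonneg (H *ᵥ (z - z₀))
    linarith

end LeastSquares

section RowWeights

variable {m n : Type*} [Fintype m] [DecidableEq m]

theorem transpose_diagonal_sqrt_mul_mul_self (A : Matrix m n ℝ) {a : m → ℝ}
    (ha : ∀ j, 0 ≤ a j) :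
    (diagonal (fun j => √(a j)) * A)ᵀ * (diagonal (fun j => √(a j)) * A) =
      Aᵀ * diagonal a * A := by
  rw [transpose_mul, diagonal_transpose, Matrix.mul_assoc, ← Matrix.mul_assoc (diagonal _),
    diagonal_mul_diagonal, funext fun j => Real.mul_self_sqrt (ha j), ← Matrix.mul_assoc]

theorem transpose_diagonal_mul_mulVec_diagonal_mulVec (A : Matrix m n ℝ) {s t : m → ℝ}
    (hst : ∀ j, s j * t j = 1) (v : m → ℝ) :
    (diagonal s * A)ᵀ *ᵥ (diagonal t *ᵥ v) = Aᵀ *ᵥ v := by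
  rw [transpose_mul, diagonal_transpose, mulVec_mulVec, Matrix.mul_assoc, diagonal_mul_diagonal,
    funext hst, diagonal_one, Matrix.mul_one]

end RowWeights

/-- Least-squares form of the projected normal equations of the IPM-HLSP:
`Δz` minimizes `z ↦ ‖H·z − g‖²` (Euclidean norm) if and only if
`(Nᵀ·C·N)·Δz = Nᵀ·r₁`. -/
theorem lsq_min_iff_projected_normal_equations {n q me mi m₀ mb : ℕ}
    (N : Matrix (Fin n) (Fin q) ℝ)
    (Ae : Matrix (Fin me) (Fin n) ℝ) (Ai : Matrix (Fin mi) (Fin n) ℝ)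
    (A₀ : Matrix (Fin m₀) (Fin n) ℝ) (Ab : Matrix (Fin mb) (Fin n) ℝ)
    (hAbN : Ab * N = 0)
    (lam₀ w₀ : Fin m₀ → ℝ)
    (hlam₀ : ∀ j, 0 < lam₀ j) (hw₀ : ∀ j, 0 < w₀ j)
    (d : Fin mi → ℝ) (hd : ∀ j, 0 < d j)
    (x : Fin n → ℝ) (be : Fin me → ℝ) (lamb : Fin mb → ℝ)
    (F : Fin m₀ → ℝ) (G : Fin mi → ℝ)
    (H : Matrix ((Fin m₀ ⊕ Fin mi) ⊕ Fin me) (Fin q) ℝ)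
    (hH : H = fromRows
      (fromRows
        (Matrix.diagonal (fun j => Real.sqrt (lam₀ j / w₀ j)) * A₀ * N)
        (Matrix.diagonal (fun j => Real.sqrt (d j)) * Ai * N))
      (Ae * N))
    (g : (Fin m₀ ⊕ Fin mi) ⊕ Fin me → ℝ)
    (hg : g = Sum.elim
      (Sum.elim
        (Matrix.diagonal (fun j => Real.sqrt (w₀ j / lam₀ j)) *ᵥ F)
        (Matrix.diagonal (fun j => 1 / Real.sqrt (d j)) *ᵥ G))
      (be - Ae *ᵥ x))
    (C : Matrix (Fin n) (Fin n) ℝ)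
    (hC : C = Aeᵀ * Ae + Aiᵀ * Matrix.diagonal d * Ai +
      A₀ᵀ * Matrix.diagonal (fun j => lam₀ j / w₀ j) * A₀)
    (r₁ : Fin n → ℝ)
    (hr₁ : r₁ = Abᵀ *ᵥ lamb + A₀ᵀ *ᵥ F + Aeᵀ *ᵥ (be - Ae *ᵥ x) + Aiᵀ *ᵥ G)
    (Δz : Fin q → ℝ) :
    (∀ z : Fin q → ℝ,
        ‖(EuclideanSpace.equiv ((Fin m₀ ⊕ Fin mi) ⊕ Fin me) ℝ).symm
            (H *ᵥ Δz - g)‖ ^ 2 ≤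
          ‖(EuclideanSpace.equiv ((Fin m₀ ⊕ Fin mi) ⊕ Fin me) ℝ).symm
            (H *ᵥ z - g)‖ ^ 2) ↔
      (Nᵀ * C * N) *ᵥ Δz = Nᵀ *ᵥ r₁ := by
  set M := fromRows (fromRows (diagonal (fun j => √(lam₀ j / w₀ j)) * A₀)
    (diagonal (fun j => √(d j)) * Ai)) Ae
  have hHM : H = M * N := by rw [hH, fromRows_mul, fromRows_mul]
  have hMM : Mᵀ * M = C := by
    rw [hC, transpose_fromRows, transpose_fromRows, fromCols_mul_fromRows, fromCols_mul_fromRows,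
      transpose_diagonal_sqrt_mul_mul_self _ fun j => (hd j).le,
      transpose_diagonal_sqrt_mul_mul_self _ fun j => (div_pos (hlam₀ j) (hw₀ j)).le]
    abel
  have hMg : Mᵀ *ᵥ g = r₁ - Abᵀ *ᵥ lamb := by
    have h₀ (j : Fin m₀) : √(lam₀ j / w₀ j) * √(w₀ j / lam₀ j) = 1 := by
      have : lam₀ j / w₀ j * (w₀ j / lam₀ j) = 1 := by
        field_simp [(hlam₀ j).ne', (hw₀ j).ne']
      rw [← Real.sqrt_mul (div_pos (hlam₀ j) (hw₀ j)).le, this, Real.sqrt_one]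
    have hᵢ (j : Fin mi) : √(d j) * (1 / √(d j)) = 1 :=
      mul_one_div_cancel (Real.sqrt_pos.2 (hd j)).ne'
    rw [hg, hr₁, transpose_fromRows, transpose_fromRows, fromCols_mulVec_sumElim,
      fromCols_mulVec_sumElim, transpose_diagonal_mul_mulVec_diagonal_mulVec _ h₀,
      transpose_diagonal_mul_mulVec_diagonal_mulVec _ hᵢ]
    abel
  have hNAb : Nᵀ *ᵥ (Abᵀ *ᵥ lamb) = 0 := by
    rw [mulVec_mulVec, ← transpose_mul, hAbN, transpose_zero, zero_mulVec]
  simp only [EuclideanSpace.norm_symm_equiv_sq]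
  rw [forall_residual_le_iff_normal_equations, hHM, transpose_mul, Matrix.mul_assoc,
    ← Matrix.mul_assoc Mᵀ, hMM, ← Matrix.mul_assoc, ← mulVec_mulVec g, hMg, mulVec_sub, hNAb,
    sub_zero]
end

section
/- Let A_e (m_e×n), A_i (m_i×n), A₀ (m₀×n) and Ā (m̄×n) be real matrices, and let x, Δx ∈ ℝⁿ; b_e, v_e, Δv_e ∈ ℝ^{m_e}; b_i, v_i, w_i, Δv_i, Δw_i ∈ ℝ^{m_i}; b₀, λ₀, w₀, Δλ₀, Δw₀ ∈ ℝ^{m₀}; b̄, v̄, λ̄, Δλ̄ ∈ ℝ^{m̄}; and s_i, s₀ ∈ ℝ. Assume v_i j − w_i j ≠ 0 and w₀ j ≠ 0 for all indices j, and set V_i := diag(v_i), W_i := diag(w_i), W₀ := diag(w₀), Λ₀ := diag(λ₀). Suppose the seven Newton-step equations hold: (1) A_eᵀ·Δv_e + A_iᵀ·Δv_i − Āᵀ·Δλ̄ − A₀ᵀ·Δλ₀ = −(A_eᵀ·v_e + A_iᵀ·v_i − Āᵀ·λ̄ − A₀ᵀ·λ₀); (2) −A_e·Δx + Δv_e = −(b_e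 − A_e·x + v_e); (3) −A_i·Δx + Δv_i + Δw_i = −(b_i − A_i·x + v_i + w_i); (4) W_i·Δv_i + V_i·Δw_i = −(w_i ⊙ v_i + s_i·𝟙); (5) −Ā·Δx = −(b̄ − Ā·x + v̄); (6) −A₀·Δx + Δw₀ = −(b₀ − A₀·x + w₀); (7) W₀·Δλ₀ + Λ₀·Δw₀ = −(λ₀ ⊙ w₀ − s₀·𝟙). Then (Δx, Δλ̄) satisfies the hierarchical augmented system C·Δx − Āᵀ·Δλ̄ = r₁ and −Ā·Δx = r₂, where C := A_eᵀ·A_e + A_iᵀ·(I + (V_i − W_i)⁻¹·W_i)·A_i + A₀ᵀ·W₀⁻¹·Λ₀·A₀, r₁ := Āᵀ·λ̄ + A₀ᵀ·F + A_eᵀ·(b_e − A_e·x) + A_iᵀ·G, r₂ := Ā·x − b̄ − v̄, F := λ₀ + W₀⁻¹·(λ₀ ⊙ (b₀ − A₀·x) + s₀·𝟙), and G := b_i − A_i·x + w_i − (V_i − W_i)⁻¹·(s_i·𝟙 + w_i ⊙ (A_i·x − b_i − w_i)). -/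
/-!
The complementarity rows (4) and (7) are diagonal, so together with the primal rows (3) and (6)
they can be solved index by index for the updated multipliers `v_i + Δv_i` and `λ₀ + Δλ₀` as
affine functions of `Δx`; this is where `v_i − w_i ≠ 0` and `w₀ ≠ 0` enter. Row (2) does the same
for `v_e + Δv_e`. Substituting the three expressions into the stationarity row (1) yields the first
augmented equation, and row (5) is the second.
-/

open Matrix

theorem Matrix.inv_diagonal_of_ne_zero {ι K : Type*} [Fintype ι] [DecidableEq ι] [Field K]
    {d : ι → K} (hd : ∀ j, d j ≠ 0) : (diagonal d)⁻¹ = diagonal d⁻¹ :=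
  inv_eq_right_inv <| by
    rw [diagonal_mul_diagonal, ← diagonal_one]
    exact congrArg diagonal (funext fun j => mul_inv_cancel₀ (hd j))

theorem Matrix.diagonal_mulVec_eq_mul {ι R : Type*} [Fintype ι] [DecidableEq ι]
    [NonUnitalNonAssocSemiring R] (d u : ι → R) : diagonal d *ᵥ u = d * u :=
  funext fun j => mulVec_diagonal d u j

section NewtonBlocks

variable {K : Type*} [Field K]

theorem newton_inequality_row_solve {y a b v w Δv Δw s : K} (hvw : v - w ≠ 0)
    (h3 : -y + Δv + Δw = -(b - a + v + w)) (h4 : w * Δv + v * Δw = -(w * v + s)) :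
    Δv + v = y + (v - w)⁻¹ * (w * y) - (b - a + w - (v - w)⁻¹ * (s + w * (a - b - w))) := by
  field_simp
  linear_combination v * h3 - h4

theorem newton_inactive_row_solve {y a b w lam Δw Δlam s : K} (hw : w ≠ 0)
    (h6 : -y + Δw = -(b - a + w)) (h7 : w * Δlam + lam * Δw = -(lam * w - s)) :
    Δlam + lam = -(w⁻¹ * (lam * y)) + (lam + w⁻¹ * (lam * (b - a) + s)) := by
  field_simp
  linear_combination h7 - lam * h6

variable {ι : Type*} [Fintype ι] [DecidableEq ι]

theorem newton_inequality_block_solve {y a b v w Δv Δw : ι → K} {s : K}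
    (hvw : ∀ j, v j - w j ≠ 0)
    (h3 : -y + Δv + Δw = -(b - a + v + w))
    (h4 : diagonal w *ᵥ Δv + diagonal v *ᵥ Δw = -(w * v + s • 1)) :
    Δv + v = (1 + (diagonal v - diagonal w)⁻¹ * diagonal w) *ᵥ y -
      (b - a + w - (diagonal v - diagonal w)⁻¹ *ᵥ (s • 1 + w * (a - b - w))) := by
  rw [diagonal_sub, inv_diagonal_of_ne_zero hvw, add_mulVec, one_mulVec, ← mulVec_mulVec]
  simp only [diagonal_mulVec_eq_mul] at h4 ⊢
  funext j
  simpa using newton_inequality_row_solve (hvw j) (congrFun h3 j) (congrFun h4 j)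

theorem newton_inactive_block_solve {y a b w lam Δw Δlam : ι → K} {s : K}
    (hw : ∀ j, w j ≠ 0)
    (h6 : -y + Δw = -(b - a + w))
    (h7 : diagonal w *ᵥ Δlam + diagonal lam *ᵥ Δw = -(lam * w - s • 1)) :
    Δlam + lam = -(((diagonal w)⁻¹ * diagonal lam) *ᵥ y) +
      (lam + (diagonal w)⁻¹ *ᵥ (lam * (b - a) + s • 1)) := by
  rw [inv_diagonal_of_ne_zero hw, ← mulVec_mulVec]
  simp only [diagonal_mulVec_eq_mul] at h7 ⊢
  funext j
  simpa using newton_inactive_row_solve (hw j) (congrFun h6 j) (congrFun h7 j)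

end NewtonBlocks

/-- Reduction of the full interior-point Newton KKT system (rows (1)–(7)) to the
hierarchical augmented system `C·Δx − Āᵀ·Δλ̄ = r₁`, `−Ā·Δx = r₂`. Here `*` on
vectors is the entrywise (Hadamard) product and `(1 : Fin _ → ℝ)` the all-ones
vector; `Ab`, `lamb`, `vb`, `bb` play the roles of `Ā`, `λ̄`, `v̄`, `b̄`. -/
theorem newton_kkt_to_hierarchical_augmented_system {me mi m₀ mb n : ℕ}
    (Ae : Matrix (Fin me) (Fin n) ℝ) (Ai : Matrix (Fin mi) (Fin n) ℝ)
    (A₀ : Matrix (Fin m₀) (Fin n) ℝ) (Ab : Matrix (Fin mb) (Fin n) ℝ)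
    (x Δx : Fin n → ℝ)
    (be ve Δve : Fin me → ℝ)
    (bi vi wi Δvi Δwi : Fin mi → ℝ)
    (b₀ lam₀ w₀ Δlam₀ Δw₀ : Fin m₀ → ℝ)
    (bb vb lamb Δlamb : Fin mb → ℝ)
    (si s₀ : ℝ)
    (hvw : ∀ j, vi j - wi j ≠ 0) (hw₀ : ∀ j, w₀ j ≠ 0)
    (Vi Wi : Matrix (Fin mi) (Fin mi) ℝ)
    (hVi : Vi = Matrix.diagonal vi) (hWi : Wi = Matrix.diagonal wi)
    (W₀ Λ₀ : Matrix (Fin m₀) (Fin m₀) ℝ)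
    (hW₀ : W₀ = Matrix.diagonal w₀) (hΛ₀ : Λ₀ = Matrix.diagonal lam₀)
    (h1 : Aeᵀ *ᵥ Δve + Aiᵀ *ᵥ Δvi - Abᵀ *ᵥ Δlamb - A₀ᵀ *ᵥ Δlam₀ =
      -(Aeᵀ *ᵥ ve + Aiᵀ *ᵥ vi - Abᵀ *ᵥ lamb - A₀ᵀ *ᵥ lam₀))
    (h2 : -(Ae *ᵥ Δx) + Δve = -(be - Ae *ᵥ x + ve))
    (h3 : -(Ai *ᵥ Δx) + Δvi + Δwi = -(bi - Ai *ᵥ x + vi + wi))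
    (h4 : Wi *ᵥ Δvi + Vi *ᵥ Δwi = -(wi * vi + si • (1 : Fin mi → ℝ)))
    (h5 : -(Ab *ᵥ Δx) = -(bb - Ab *ᵥ x + vb))
    (h6 : -(A₀ *ᵥ Δx) + Δw₀ = -(b₀ - A₀ *ᵥ x + w₀))
    (h7 : W₀ *ᵥ Δlam₀ + Λ₀ *ᵥ Δw₀ = -(lam₀ * w₀ - s₀ • (1 : Fin m₀ → ℝ)))
    (F : Fin m₀ → ℝ)
    (hF : F = lam₀ + W₀⁻¹ *ᵥ (lam₀ * (b₀ - A₀ *ᵥ x) + s₀ • (1 : Fin m₀ → ℝ)))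
    (G : Fin mi → ℝ)
    (hG : G = bi - Ai *ᵥ x + wi -
      (Vi - Wi)⁻¹ *ᵥ (si • (1 : Fin mi → ℝ) + wi * (Ai *ᵥ x - bi - wi)))
    (C : Matrix (Fin n) (Fin n) ℝ)
    (hC : C = Aeᵀ * Ae + Aiᵀ * (1 + (Vi - Wi)⁻¹ * Wi) * Ai + A₀ᵀ * W₀⁻¹ * Λ₀ * A₀)
    (r₁ : Fin n → ℝ)
    (hr₁ : r₁ = Abᵀ *ᵥ lamb + A₀ᵀ *ᵥ F + Aeᵀ *ᵥ (be - Ae *ᵥ x) + Aiᵀ *ᵥ G)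
    (r₂ : Fin mb → ℝ)
    (hr₂ : r₂ = Ab *ᵥ x - bb - vb) :
    C *ᵥ Δx - Abᵀ *ᵥ Δlamb = r₁ ∧ -(Ab *ᵥ Δx) = r₂ := by
  subst hVi hWi hW₀ hΛ₀ hF hG hC hr₁ hr₂
  -- `Fin k → ℝ` is a commutative ring, so `linear_combination` works on whole vectors,
  -- treating the matrix-vector products as atoms.
  have hPe : Δve + ve = Ae *ᵥ Δx - (be - Ae *ᵥ x) := by linear_combination h2
  have hPi := newton_inequality_block_solve hvw h3 h4
  have hP₀ := newton_inactive_block_solve hw₀ h6 h7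
  have stationarity : Aeᵀ *ᵥ (Δve + ve) + Aiᵀ *ᵥ (Δvi + vi) - A₀ᵀ *ᵥ (Δlam₀ + lam₀) =
      Abᵀ *ᵥ (Δlamb + lamb) := by
    simp only [mulVec_add]
    linear_combination h1
  rw [hPe, hPi, hP₀] at stationarity
  simp only [mulVec_add, mulVec_sub, mulVec_neg, add_mulVec, one_mulVec,
    ← mulVec_mulVec] at stationarity ⊢
  constructor
  · linear_combination stationarity
  · linear_combination h5
end

section
/- Let B₁ be a real p×r matrix, B₂ a real p×s matrix, R₁ an r×r matrix, T₁ an r×s matrix, and let U be a (p+r)×(p+r) real matrix with Uᵀ·U = U·Uᵀ = I, written in blocks U = [U₁₁ U₁₂; U₂₁ U₂₂] with U₁₁ of size p×r, U₁₂ of size p×p, U₂₁ of size r×r, U₂₂ of size r×p. Suppose [B₁; R₁] = U·[R₂; 0] for some r×r matrix R₂ (with a p×r zero block). Define S₂ := U₁₁ᵀ·B₂ + U₂₁ᵀ·T₁ and S₃ := U₁₂ᵀ·B₂ + U₂₂ᵀ·T₁. Then [B₁ B₂; R₁ T₁] = U·[R₂ S₂; 0 S₃]. Moreover, if additionally S₃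 = V·M·Πᵀ for matrices V (p×p), M (p×s), and Π (s×s) with Π·Πᵀ = I, then [B₁ B₂; R₁ T₁] = U·[I 0; 0 V]·[R₂ S₂·Π; 0 M]·[I 0; 0 Πᵀ]. -/
open Matrix

/-!
Since `U * Uᵀ = 1`, any block column `X₂` can be appended to a factorization `X₁ = U * Y₁` as
`[X₁ X₂] = U * [Y₁ (Uᵀ * X₂)]`; for `X₂ = [B₂; T₁]` the blocks of `Uᵀ * X₂` are exactly `S₂` and `S₃`.
Substituting `S₃ = V * M * Πᵀ` and using `Π * Πᵀ = 1` to write `S₂ = S₂ * Π * Πᵀ` splits the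
triangular factor into the three block matrices of the second claim.
-/

namespace Matrix

variable {R m n k₁ k₂ : Type*} [Semiring R]

theorem fromCols_eq_mul_fromCols_transpose_mul [Fintype m] [Fintype n] [DecidableEq m]
    {U : Matrix m n R} {X₁ : Matrix m k₁ R} {Y₁ : Matrix n k₁ R} (hU : U * Uᵀ = 1)
    (h : X₁ = U * Y₁) (X₂ : Matrix m k₂ R) :
    fromCols X₁ X₂ = U * fromCols Y₁ (Uᵀ * X₂) := by
  rw [mul_fromCols, ← Matrix.mul_assoc, hU, Matrix.one_mul, h]

theorem fromBlocks_one_zero_zero_mul_fromBlocks_mul_fromBlocks_one_zero_zero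
    {l o : Type*} [Fintype m] [Fintype k₂] [Fintype l] [DecidableEq m]
    (V : Matrix k₂ k₂ R) (A : Matrix m m R) (B : Matrix m l R) (M : Matrix k₂ l R)
    (Q : Matrix l o R) :
    fromBlocks (1 : Matrix m m R) 0 0 V * fromBlocks A B (0 : Matrix k₂ m R) M *
        fromBlocks (1 : Matrix m m R) 0 0 Q =
      fromBlocks A (B * Q) 0 (V * M * Q) := by
  simp [fromBlocks_multiply, Matrix.mul_assoc]

end Matrix

theorem multistage_qr_identity_general {p r s : ℕ}
    (B₁ : Matrix (Fin p) (Fin r) ℝ) (B₂ : Matrix (Fin p) (Fin s) ℝ)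
    (R₁ : Matrix (Fin r) (Fin r) ℝ) (T₁ : Matrix (Fin r) (Fin s) ℝ)
    (U : Matrix (Fin p ⊕ Fin r) (Fin r ⊕ Fin p) ℝ)
    (U₁₁ : Matrix (Fin p) (Fin r) ℝ) (U₁₂ : Matrix (Fin p) (Fin p) ℝ)
    (U₂₁ : Matrix (Fin r) (Fin r) ℝ) (U₂₂ : Matrix (Fin r) (Fin p) ℝ)
    (hU : U = fromBlocks U₁₁ U₁₂ U₂₁ U₂₂)
    (hUo₂ : U * Uᵀ = 1)
    (R₂ : Matrix (Fin r) (Fin r) ℝ)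
    (h1 : fromRows B₁ R₁ = U * fromRows R₂ (0 : Matrix (Fin p) (Fin r) ℝ))
    (S₂ : Matrix (Fin r) (Fin s) ℝ) (S₃ : Matrix (Fin p) (Fin s) ℝ)
    (hS₂ : S₂ = U₁₁ᵀ * B₂ + U₂₁ᵀ * T₁)
    (hS₃ : S₃ = U₁₂ᵀ * B₂ + U₂₂ᵀ * T₁) :
    fromBlocks B₁ B₂ R₁ T₁ = U * fromBlocks R₂ S₂ 0 S₃ ∧
      ∀ (V : Matrix (Fin p) (Fin p) ℝ) (M : Matrix (Fin p) (Fin s) ℝ)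
        (Pm : Matrix (Fin s) (Fin s) ℝ),
        S₃ = V * M * Pmᵀ → Pm * Pmᵀ = 1 →
        fromBlocks B₁ B₂ R₁ T₁ =
          U * fromBlocks (1 : Matrix (Fin r) (Fin r) ℝ) 0 0 V * fromBlocks R₂ (S₂ * Pm) 0 M *
            fromBlocks 1 0 0 Pmᵀ := by
  have hS : Uᵀ * fromRows B₂ T₁ = fromRows S₂ S₃ := by
    rw [hU, fromBlocks_transpose, fromBlocks_mul_fromRows, hS₂, hS₃]
  have stage₂ : fromBlocks B₁ B₂ R₁ T₁ = U * fromBlocks R₂ S₂ 0 S₃ := by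
    rw [← fromCols_fromRows_eq_fromBlocks, fromCols_eq_mul_fromCols_transpose_mul hUo₂ h1, hS,
      fromCols_fromRows_eq_fromBlocks]
  refine ⟨stage₂, fun V M Pm hVMP hPm => ?_⟩
  -- Some products in the statement elaborate with a `CStarMatrix` `HMul` instance, which `rw` and
  -- `simp` cannot match against `Matrix` lemmas; closing by `exact`/`rwa` works up to defeq.
  have split : fromBlocks R₂ S₂ 0 S₃ = fromBlocks (1 : Matrix (Fin r) (Fin r) ℝ) 0 0 V *
      fromBlocks R₂ (S₂ * Pm) 0 M * fromBlocks 1 0 0 Pmᵀ := by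
    have h :=
      fromBlocks_one_zero_zero_mul_fromBlocks_mul_fromBlocks_one_zero_zero V R₂ (S₂ * Pm) M Pmᵀ
    rwa [Matrix.mul_assoc S₂, hPm, Matrix.mul_one, ← hVMP, eq_comm] at h
  rw [stage₂, split]
  exact (Matrix.mul_assoc U _ _).symm.trans (congrArg (· * _) (Matrix.mul_assoc U _ _).symm)

/-- Multi-stage QR factorization identity: if `U` is orthogonal with blocks
`U = [U₁₁ U₁₂; U₂₁ U₂₂]` and `[B₁; R₁] = U·[R₂; 0]`, then with
`S₂ = U₁₁ᵀ·B₂ + U₂₁ᵀ·T₁` and `S₃ = U₁₂ᵀ·B₂ + U₂₂ᵀ·T₁` one has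
`[B₁ B₂; R₁ T₁] = U·[R₂ S₂; 0 S₃]`; moreover, if `S₃ = V·M·Πᵀ` with `Π·Πᵀ = I`,
then `[B₁ B₂; R₁ T₁] = U·[I 0; 0 V]·[R₂ S₂·Π; 0 M]·[I 0; 0 Πᵀ]`. -/
theorem multistage_qr_identity {p r s : ℕ}
    (B₁ : Matrix (Fin p) (Fin r) ℝ) (B₂ : Matrix (Fin p) (Fin s) ℝ)
    (R₁ : Matrix (Fin r) (Fin r) ℝ) (T₁ : Matrix (Fin r) (Fin s) ℝ)
    (U : Matrix (Fin p ⊕ Fin r) (Fin r ⊕ Fin p) ℝ)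
    (U₁₁ : Matrix (Fin p) (Fin r) ℝ) (U₁₂ : Matrix (Fin p) (Fin p) ℝ)
    (U₂₁ : Matrix (Fin r) (Fin r) ℝ) (U₂₂ : Matrix (Fin r) (Fin p) ℝ)
    (hU : U = fromBlocks U₁₁ U₁₂ U₂₁ U₂₂)
    (hUo₁ : Uᵀ * U = 1) (hUo₂ : U * Uᵀ = 1)
    (R₂ : Matrix (Fin r) (Fin r) ℝ)
    (h1 : fromRows B₁ R₁ = U * fromRows R₂ (0 : Matrix (Fin p) (Fin r) ℝ))
    (S₂ : Matrix (Fin r) (Fin s) ℝ) (S₃ : Matrix (Fin p) (Fin s) ℝ)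
    (hS₂ : S₂ = U₁₁ᵀ * B₂ + U₂₁ᵀ * T₁)
    (hS₃ : S₃ = U₁₂ᵀ * B₂ + U₂₂ᵀ * T₁) :
    fromBlocks B₁ B₂ R₁ T₁ = U * fromBlocks R₂ S₂ 0 S₃ ∧
      ∀ (V : Matrix (Fin p) (Fin p) ℝ) (M : Matrix (Fin p) (Fin s) ℝ)
        (Pm : Matrix (Fin s) (Fin s) ℝ),
        S₃ = V * M * Pmᵀ → Pm * Pmᵀ = 1 →
        fromBlocks B₁ B₂ R₁ T₁ =
          U * fromBlocks (1 : Matrix (Fin r) (Fin r) ℝ) 0 0 V * fromBlocks R₂ (S₂ * Pm) 0 M *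
            fromBlocks 1 0 0 Pmᵀ :=
  multistage_qr_identity_general B₁ B₂ R₁ T₁ U U₁₁ U₁₂ U₂₁ U₂₂ hU hUo₂ R₂ h1 S₂ S₃ hS₂ hS₃
end
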